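/- Let F be three times differentiable with |F'''| ≤ M₃, let x, z, δ ∈ ℝⁿ with ‖x‖₂ = √n, and let d > 0. Define φ − φ̃ = (1/(n·d))·xᵀR, where Rᵢ = F'(zᵢ+δᵢ) − F'(zᵢ) − F''(zᵢ)δᵢ. Then |φ − φ̃| ≤ (M₃/(2d))·‖δ‖₂·‖δ‖∞/√n, and if additionally ‖δ‖₂ ≤ ℓθ√n and ‖δ‖∞ ≤ ℓθL for constants ℓ, θ, L ≥ 0, then |φ − φ̃| ≤ (M₃/(2d))·ℓ²θ²L. -/

import Mathlib

/-!
Each `Rᵢ` is a second-order Taylor remainder of `F'`, so `|Rᵢ| ≤ M₃ δᵢ² / 2 ≤ (M₃ / 2) ‖δ‖∞ |δᵢ|`.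
Cauchy–Schwarz then gives `|xᵀR| ≤ (M₃ / 2) ‖δ‖∞ ‖x‖₂ ‖δ‖₂`, and `‖x‖₂ = √n` turns the prefactor
`1 / (n d)` into `1 / (d √n)`. The second bound follows by monotonicity, since `√n / √n ≤ 1`.
-/

open Set Finset

theorem abs_sub_le_of_abs_hasDerivAt_le {f f' : ℝ → ℝ} {M : ℝ}
    (hf : ∀ t, HasDerivAt f (f' t) t) (hM : ∀ t, |f' t| ≤ M) (s t : ℝ) :
    |f s - f t| ≤ M * |s - t| := by
  simpa [Real.norm_eq_abs] using Convex.norm_image_sub_le_of_norm_hasDerivWithin_le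
    (fun u _ => (hf u).hasDerivWithinAt) (fun u _ => hM u) convex_univ (mem_univ t) (mem_univ s)

theorem abs_taylor_remainder_le {g g' g'' : ℝ → ℝ} {M : ℝ}
    (hg : ∀ t, HasDerivAt g (g' t) t) (hg' : ∀ t, HasDerivAt g' (g'' t) t)
    (hM : ∀ t, |g'' t| ≤ M) (a h : ℝ) :
    |g (a + h) - g a - g' a * h| ≤ M / 2 * h ^ 2 := by
  -- Fence `s ↦ g (a + s h) - g a - g' a (s h)` by `s ↦ M h² s² / 2` on `[0, 1]`,
  -- which handles both signs of `h` at once.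
  have hv : ∀ s, HasDerivAt (fun s => g (a + s * h) - g a - g' a * (s * h))
      ((g' (a + s * h) - g' a) * h) s := by
    intro s
    have hlin : HasDerivAt (fun s : ℝ => s * h) h s := by
      simpa using (hasDerivAt_id s).mul_const h
    have := (((hg (a + s * h)).comp s (hlin.const_add a)).sub_const (g a)).sub
      (hlin.const_mul (g' a))
    exact this.congr_deriv (by ring)
  have hB : ∀ s, HasDerivAt (fun s : ℝ => M / 2 * h ^ 2 * s ^ 2) (M * h ^ 2 * s) s := by
    intro s
    exact ((hasDerivAt_pow 2 s).const_mul (M / 2 * h ^ 2)).congr_deriv (by ring)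
  have key := image_norm_le_of_norm_deriv_right_le_deriv_boundary (a := 0) (b := 1)
    (fun s _ => (hv s).continuousAt.continuousWithinAt) (fun s _ => (hv s).hasDerivWithinAt)
    (by simp) hB ?_ (right_mem_Icc.2 zero_le_one)
  · simpa [Real.norm_eq_abs] using key
  · rintro s ⟨hs, -⟩
    have hlip := abs_sub_le_of_abs_hasDerivAt_le hg' hM (a + s * h) a
    rw [Real.norm_eq_abs, abs_mul]
    calc |g' (a + s * h) - g' a| * |h| ≤ M * |s * h| * |h| := by gcongr; simpa using hlip
      _ = M * h ^ 2 * s := by rw [abs_mul, abs_of_nonneg hs, ← sq_abs h]; ring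

theorem abs_sum_mul_le_of_abs_le_mul_sq {ι : Type*} [Fintype ι] {x δ r : ι → ℝ} {C : ℝ}
    (hC : 0 ≤ C) (hr : ∀ i, |r i| ≤ C * δ i ^ 2) :
    |∑ i, x i * r i| ≤ C * √(∑ i, x i ^ 2) * √(∑ i, δ i ^ 2) * ⨆ i, |δ i| := by
  set S := ⨆ i, |δ i|
  have hterm : ∀ i, |x i * r i| ≤ C * S * (|x i| * |δ i|) := fun i =>
    calc |x i * r i| ≤ |x i| * (C * |δ i| * |δ i|) := by
          rw [abs_mul, mul_assoc, ← sq, sq_abs]; gcongr; exact hr i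
      _ ≤ |x i| * (C * S * |δ i|) := by
          gcongr; exact le_ciSup (f := fun i => |δ i|) (Set.finite_range _).bddAbove i
      _ = C * S * (|x i| * |δ i|) := by ring
  calc |∑ i, x i * r i| ≤ ∑ i, C * S * (|x i| * |δ i|) :=
        (abs_sum_le_sum_abs _ _).trans (sum_le_sum fun i _ => hterm i)
    _ = C * S * ∑ i, |x i| * |δ i| := (mul_sum ..).symm
    _ ≤ C * S * (√(∑ i, |x i| ^ 2) * √(∑ i, |δ i| ^ 2)) := by
        gcongr
        · exact mul_nonneg hC (Real.iSup_nonneg fun i => abs_nonneg _)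
        · exact Real.sum_mul_le_sqrt_mul_sqrt _ _ _
    _ = C * √(∑ i, x i ^ 2) * √(∑ i, δ i ^ 2) * S := by simp only [sq_abs]; ring

theorem numerator_taylor_error_general
    (F' F'' F''' : ℝ → ℝ) (M₃ : ℝ)
    (hF' : ∀ t, HasDerivAt F' (F'' t) t)
    (hF'' : ∀ t, HasDerivAt F'' (F''' t) t)
    (hM : ∀ ξ, |F''' ξ| ≤ M₃)
    (n : ℕ) (x z δ : Fin n → ℝ) (d : ℝ) (hd : 0 < d)
    (hx : Real.sqrt (∑ i, x i ^ 2) = Real.sqrt n)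
    (R : Fin n → ℝ)
    (hR : ∀ i, R i = F' (z i + δ i) - F' (z i) - F'' (z i) * δ i) :
    |(1 / ((n : ℝ) * d)) * ∑ i, x i * R i| ≤
      (M₃ / (2 * d)) * Real.sqrt (∑ i, δ i ^ 2) * (⨆ i, |δ i|) /
        Real.sqrt n ∧
    (∀ ℓ θ L : ℝ, 0 ≤ ℓ → 0 ≤ θ → 0 ≤ L →
      Real.sqrt (∑ i, δ i ^ 2) ≤ ℓ * θ * Real.sqrt n →
      (⨆ i, |δ i|) ≤ ℓ * θ * L →
      |(1 / ((n : ℝ) * d)) * ∑ i, x i * R i| ≤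
        (M₃ / (2 * d)) * ℓ ^ 2 * θ ^ 2 * L) := by
  have hM₃ : 0 ≤ M₃ := (abs_nonneg _).trans (hM 0)
  have hsum := abs_sum_mul_le_of_abs_le_mul_sq (x := x) (by positivity) fun i =>
    (hR i).symm ▸ abs_taylor_remainder_le hF' hF'' hM (z i) (δ i)
  rw [hx] at hsum
  have hfirst : |(1 / ((n : ℝ) * d)) * ∑ i, x i * R i| ≤
      (M₃ / (2 * d)) * √(∑ i, δ i ^ 2) * (⨆ i, |δ i|) / √n := by
    rw [abs_mul, abs_of_nonneg (by positivity)]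
    calc 1 / (n * d) * |∑ i, x i * R i|
        ≤ 1 / (n * d) * (M₃ / 2 * √n * √(∑ i, δ i ^ 2) * ⨆ i, |δ i|) := by gcongr
      _ = (M₃ / (2 * d)) * √(∑ i, δ i ^ 2) * (⨆ i, |δ i|) * (√n / n) := by ring
      _ = (M₃ / (2 * d)) * √(∑ i, δ i ^ 2) * (⨆ i, |δ i|) / √n := by
        rw [Real.sqrt_div_self', mul_one_div]
  refine ⟨hfirst, fun ℓ θ L hℓ hθ hL h₂ hsup => hfirst.trans ?_⟩
  calc (M₃ / (2 * d)) * √(∑ i, δ i ^ 2) * (⨆ i, |δ i|) / √n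
      ≤ (M₃ / (2 * d)) * (ℓ * θ * √n) * (ℓ * θ * L) / √n := by
        have hcoef : 0 ≤ M₃ / (2 * d) := by positivity
        gcongr
        exact Real.iSup_nonneg fun i => abs_nonneg _
    _ = (M₃ / (2 * d)) * ℓ ^ 2 * θ ^ 2 * L * (√n / √n) := by ring
    _ ≤ (M₃ / (2 * d)) * ℓ ^ 2 * θ ^ 2 * L := by
        apply mul_le_of_le_one_right (by positivity) (div_self_le_one _)

theorem numerator_taylor_error
    (F F' F'' F''' : ℝ → ℝ) (M₃ : ℝ)
    (hF : ∀ t, HasDerivAt F (F' t) t)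
    (hF' : ∀ t, HasDerivAt F' (F'' t) t)
    (hF'' : ∀ t, HasDerivAt F'' (F''' t) t)
    (hM : ∀ ξ, |F''' ξ| ≤ M₃)
    (n : ℕ) (x z δ : Fin n → ℝ) (d : ℝ) (hd : 0 < d)
    (hx : Real.sqrt (∑ i, x i ^ 2) = Real.sqrt n)
    (R : Fin n → ℝ)
    (hR : ∀ i, R i = F' (z i + δ i) - F' (z i) - F'' (z i) * δ i) :
    |(1 / ((n : ℝ) * d)) * ∑ i, x i * R i| ≤
      (M₃ / (2 * d)) * Real.sqrt (∑ i, δ i ^ 2) * (⨆ i, |δ i|) /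
        Real.sqrt n ∧
    (∀ ℓ θ L : ℝ, 0 ≤ ℓ → 0 ≤ θ → 0 ≤ L →
      Real.sqrt (∑ i, δ i ^ 2) ≤ ℓ * θ * Real.sqrt n →
      (⨆ i, |δ i|) ≤ ℓ * θ * L →
      |(1 / ((n : ℝ) * d)) * ∑ i, x i * R i| ≤
        (M₃ / (2 * d)) * ℓ ^ 2 * θ ^ 2 * L) :=
  numerator_taylor_error_general F' F'' F''' M₃ hF' hF'' hM n x z δ d hd hx R hR
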